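/- arXiv:2403.11599 — 3 statements merged into one kernel-verified Lean document; each statement's English description precedes it below -/
import Mathlib

section
/- Let α ∈ (0,1), (λ_k) an increasing sequence of positive reals, (a_k) nonnegative with ∑ a_k/λ_k² < ∞. Then as R ↓ 0, ∑_{k=1}^∞ a_k / (R^{2α} + 2 R^α cos(απ) λ_k + λ_k²) = c − 2 cos(απ) c' R^α + O(R^{2α}), where c = ∑ a_k/λ_k² and c' = ∑ a_k/λ_k³. -/
/-!
Write `x = Rᵅ` and `γ = cos (απ)`, so `|γ| < 1`. The denominator
`Dₖ = (x + γ λₖ)² + (1 - γ²) λₖ²` is at least `(1 - γ²) λₖ²`, and the Taylor remainder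
`1 / Dₖ - 1 / λₖ² + 2 γ x / λₖ³ = x² ((4γ² - 1) λₖ + 2 γ x) / (Dₖ λₖ³)` is therefore
`O(x² / λₖ²)` uniformly in `k` as soon as `|x| ≤ λ₀`. Summing against `aₖ` bounds the error by
a multiple of `c x²`.
-/

open Real Filter Asymptotics Topology

lemma one_sub_sq_mul_sq_le (γ x l : ℝ) :
    (1 - γ ^ 2) * l ^ 2 ≤ x ^ 2 + 2 * x * γ * l + l ^ 2 := by
  nlinarith [sq_nonneg (x + γ * l)]

lemma one_div_quadratic_sub_taylor {γ x l : ℝ} (hl : l ≠ 0)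
    (hD : x ^ 2 + 2 * x * γ * l + l ^ 2 ≠ 0) :
    1 / (x ^ 2 + 2 * x * γ * l + l ^ 2) - 1 / l ^ 2 + 2 * γ * x / l ^ 3
      = x ^ 2 * ((4 * γ ^ 2 - 1) * l + 2 * γ * x) / ((x ^ 2 + 2 * x * γ * l + l ^ 2) * l ^ 3) := by
  rw [div_sub_div _ _ hD (pow_ne_zero 2 hl), div_add_div _ _ (by positivity) (pow_ne_zero 3 hl),
    div_eq_div_iff (by positivity) (by positivity)]
  ring

lemma abs_one_div_quadratic_sub_taylor_le {γ x l₀ l : ℝ} (hγ : |γ| < 1) (hl₀ : 0 < l₀)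
    (hx : |x| ≤ l₀) (hl : l₀ ≤ l) :
    |1 / (x ^ 2 + 2 * x * γ * l + l ^ 2) - 1 / l ^ 2 + 2 * γ * x / l ^ 3|
      ≤ 5 / ((1 - γ ^ 2) * l₀ ^ 2) * x ^ 2 * (1 / l ^ 2) := by
  have hl0 : 0 < l := hl₀.trans_le hl
  have hγ2 : γ ^ 2 < 1 := by nlinarith [sq_abs γ, abs_nonneg γ]
  have hs : 0 < 1 - γ ^ 2 := by linarith
  have hD : (1 - γ ^ 2) * l ^ 2 ≤ x ^ 2 + 2 * x * γ * l + l ^ 2 := one_sub_sq_mul_sq_le γ x l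
  have hDpos : 0 < x ^ 2 + 2 * x * γ * l + l ^ 2 := lt_of_lt_of_le (by positivity) hD
  have hnum : |(4 * γ ^ 2 - 1) * l + 2 * γ * x| ≤ 5 * l := by
    calc |(4 * γ ^ 2 - 1) * l + 2 * γ * x|
        ≤ |4 * γ ^ 2 - 1| * l + 2 * |γ| * |x| := by
          refine (abs_add_le _ _).trans ?_
          rw [abs_mul, abs_mul, abs_mul, abs_of_pos hl0, abs_two]
      _ ≤ 3 * l + 2 * 1 * l := by
          gcongr
          · rw [abs_le]; constructor <;> nlinarith
          · exact hx.trans hl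
      _ = 5 * l := by ring
  rw [one_div_quadratic_sub_taylor hl0.ne' hDpos.ne', abs_div, abs_mul, abs_sq,
    abs_of_pos (mul_pos hDpos (pow_pos hl0 3))]
  calc x ^ 2 * |(4 * γ ^ 2 - 1) * l + 2 * γ * x| / ((x ^ 2 + 2 * x * γ * l + l ^ 2) * l ^ 3)
      ≤ x ^ 2 * (5 * l) / ((1 - γ ^ 2) * l ^ 2 * l ^ 3) := by gcongr
    _ = 5 / ((1 - γ ^ 2) * l ^ 2) * x ^ 2 * (1 / l ^ 2) := by field_simp
    _ ≤ 5 / ((1 - γ ^ 2) * l₀ ^ 2) * x ^ 2 * (1 / l ^ 2) := by gcongr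

lemma summable_div_pow_succ {l₀ : ℝ} (hl₀ : 0 < l₀) {lam a : ℕ → ℝ} (hlam : ∀ k, l₀ ≤ lam k)
    (ha : ∀ k, 0 ≤ a k) {n : ℕ} (hsum : Summable fun k => a k / lam k ^ n) :
    Summable fun k => a k / lam k ^ (n + 1) := by
  refine (hsum.mul_right l₀⁻¹).of_nonneg_of_le (fun k => ?_) (fun k => ?_)
  · have := hl₀.trans_le (hlam k)
    have := ha k
    positivity
  · have := hl₀.trans_le (hlam k)
    rw [pow_succ, ← div_div, div_eq_mul_inv _ (lam k)]
    gcongr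
    · have := ha k; positivity
    · exact hlam k

theorem tsum_div_quadratic_sub_isBigO {γ l₀ : ℝ} (hγ : |γ| < 1) (hl₀ : 0 < l₀)
    {lam a : ℕ → ℝ} (hlam : ∀ k, l₀ ≤ lam k) (ha : ∀ k, 0 ≤ a k)
    (hsum : Summable fun k => a k / lam k ^ 2) :
    (fun x : ℝ => (∑' k, a k / (x ^ 2 + 2 * x * γ * lam k + lam k ^ 2))
        - ((∑' k, a k / lam k ^ 2) - 2 * γ * (∑' k, a k / lam k ^ 3) * x))
      =O[𝓝 0] fun x => x ^ 2 := by
  set K := 5 / ((1 - γ ^ 2) * l₀ ^ 2)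
  refine IsBigO.of_bound (K * ∑' k, a k / lam k ^ 2) ?_
  filter_upwards [Metric.closedBall_mem_nhds (0 : ℝ) hl₀] with x hx
  rw [Metric.mem_closedBall, dist_zero_right, Real.norm_eq_abs] at hx
  set r : ℕ → ℝ := fun k =>
    a k * (1 / (x ^ 2 + 2 * x * γ * lam k + lam k ^ 2) - 1 / lam k ^ 2 + 2 * γ * x / lam k ^ 3)
  have hr : ∀ k, ‖r k‖ ≤ K * x ^ 2 * (a k / lam k ^ 2) := fun k => by
    rw [Real.norm_eq_abs, abs_mul, abs_of_nonneg (ha k), mul_comm]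
    calc _ ≤ K * x ^ 2 * (1 / lam k ^ 2) * a k :=
          mul_le_mul_of_nonneg_right (abs_one_div_quadratic_sub_taylor_le hγ hl₀ hx (hlam k)) (ha k)
      _ = _ := by ring
  have hr_sum : Summable r := (hsum.mul_left (K * x ^ 2)).of_norm_bounded hr
  have hsum3 := summable_div_pow_succ hl₀ hlam ha hsum
  have hsplit : HasSum (fun k => a k / (x ^ 2 + 2 * x * γ * lam k + lam k ^ 2))
      (∑' k, r k + ((∑' k, a k / lam k ^ 2) - 2 * γ * (∑' k, a k / lam k ^ 3) * x)) := by
    convert hr_sum.hasSum.add (hsum.hasSum.sub (hsum3.hasSum.mul_left (2 * γ * x))) using 1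
    · funext k
      simp only [r]
      ring
    · ring
  rw [hsplit.tsum_eq, add_sub_cancel_right, Real.norm_of_nonneg (sq_nonneg x)]
  calc ‖∑' k, r k‖ ≤ K * x ^ 2 * ∑' k, a k / lam k ^ 2 :=
        tsum_of_norm_bounded (hsum.hasSum.mul_left _) hr
    _ = _ := by ring

/-- With `α ∈ (0,1)`, `(λ k)` increasing positive, `(a k)` nonnegative and
`∑ a k / λ k ² < ∞`, as `R ↓ 0` we have
`∑ₖ a k / (R^{2α} + 2 Rᵅ cos(απ) λ k + λ k ²) = c − 2 cos(απ) c' Rᵅ + O(R^{2α})`,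
where `c = ∑ a k / λ k ²` and `c' = ∑ a k / λ k ³`. -/
theorem stmt8 (α : ℝ) (hα : α ∈ Set.Ioo (0:ℝ) 1)
    (lam : ℕ → ℝ) (hpos : ∀ k, 0 < lam k) (hmono : StrictMono lam)
    (a : ℕ → ℝ) (ha : ∀ k, 0 ≤ a k)
    (hsum : Summable (fun k => a k / (lam k) ^ 2))
    (c c' : ℝ) (hc : c = ∑' k, a k / (lam k) ^ 2) (hc' : c' = ∑' k, a k / (lam k) ^ 3) :
    (fun R : ℝ =>
        (∑' k, a k / (R ^ (2 * α) + 2 * R ^ α * Real.cos (α * π) * lam k + (lam k) ^ 2))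
          - (c - 2 * Real.cos (α * π) * c' * R ^ α))
      =O[nhdsWithin 0 (Set.Ioi 0)] (fun R : ℝ => R ^ (2 * α)) := by
  subst hc hc'
  obtain ⟨hα₀, hα₁⟩ := hα
  have hcos : |cos (α * π)| < 1 := by
    have hsin : 0 < sin (α * π) := sin_pos_of_pos_of_lt_pi (by positivity) (by nlinarith [pi_pos])
    rw [← sq_lt_one_iff_abs_lt_one]
    nlinarith [sin_sq_add_cos_sq (α * π)]
  have hRα : Tendsto (fun R : ℝ => R ^ α) (𝓝[>] 0) (𝓝 0) := by
    have := (continuousAt_rpow_const 0 α (Or.inr hα₀.le)).tendsto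
    rw [zero_rpow hα₀.ne'] at this
    exact this.mono_left nhdsWithin_le_nhds
  have hsq : ∀ᶠ R : ℝ in 𝓝[>] 0, R ^ (2 * α) = (R ^ α) ^ 2 := by
    filter_upwards [self_mem_nhdsWithin] with R hR
    rw [mul_comm, rpow_mul (le_of_lt hR), rpow_two]
  refine ((tsum_div_quadratic_sub_isBigO hcos (hpos 0) (fun k => hmono.monotone k.zero_le) ha
    hsum).comp_tendsto hRα).congr' ?_ ?_ <;>
    filter_upwards [hsq] with R hR <;> simp only [Function.comp, hR]
end

section
/- Let α ∈ (0,1), and for j = 1,2 let (λ_{j,k})_{k≥1} be strictly increasing sequences of positive reals and (a_{j,k}) sequences of positive reals with ∑_k a_{j,k}/λ_{j,k}² < ∞. Suppose that for all z outside the poles, ∑_k a_{1,k} / ((z e^{iαπ} + λ_{1,k})(z e^{-iαπ} + λ_{1,k})) = ∑_k a_{2,k} / ((z e^{iαπ} + λ_{2,k})(z e^{-iαπ} + λ_{2,k})). Then λ_{1,k} = λ_{2,k} and a_{1,k} = a_{2,k} for all k. -/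
/-!
Restrict both sides to the ray `z = -s e^{-iαπ}`, `s > 0`: with `u = e^{-iαπ}` the `k`-th
summand becomes `a_k / ((λ_k - s)(λ_k - s u²))`, which has a simple pole at `s = λ_k` while its
second factor stays away from zero, `‖λ - s u²‖ ≥ (λ + s) |Im u|`. If all `λ_k ≥ μ > 0`, then
`(μ - s)/(λ_k - s) ≤ μ / λ_k` for `0 ≤ s < μ`, so by dominated convergence `(μ - s)` times the
sum tends, as `s → μ⁻`, to `a_k / (μ - μ u²)` if `μ = λ_k` for some `k`, and to `0` otherwise.
By strong induction on `n`: once the first `n` pairs agree, the tails from `n` on coincide on a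
left neighbourhood of `μ = min(λ_{1,n}, λ_{2,n})`, and comparing these one-sided residues gives
the `n`-th pair.
-/

open Real Complex Filter Topology

noncomputable def rayTerm (u : ℂ) (L a s : ℝ) : ℂ :=
  a / ((L - s) * (L - s * u ^ 2))

section
variable {u : ℂ}

lemma add_mul_abs_im_le_norm_sub_mul_sq (hu : ‖u‖ = 1) (L s : ℝ) :
    (L + s) * |u.im| ≤ ‖(L : ℂ) - s * u ^ 2‖ := by
  have hconj : u * (starRingEnd ℂ) u = 1 := by
    rw [Complex.mul_conj, Complex.normSq_eq_norm_sq, hu]; norm_num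
  have hfactor : (L : ℂ) - s * u ^ 2 = u * (L * (starRingEnd ℂ) u - s * u) := by
    linear_combination (-(L : ℂ)) * hconj
  have him : (L * (starRingEnd ℂ) u - s * u : ℂ).im = -((L + s) * u.im) := by
    simp only [sub_im, mul_im, ofReal_re, conj_im, mul_neg, ofReal_im, conj_re, zero_mul, add_zero]
    ring
  rw [hfactor, norm_mul, hu, one_mul]
  calc (L + s) * |u.im| ≤ |L + s| * |u.im| := by gcongr; exact le_abs_self _
    _ = |(L * (starRingEnd ℂ) u - s * u : ℂ).im| := by rw [him, abs_neg, abs_mul]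
    _ ≤ _ := Complex.abs_im_le_norm _

lemma sub_mul_sq_ne_zero (hu : ‖u‖ = 1) (hu' : u.im ≠ 0) {L s : ℝ} (hLs : 0 < L + s) :
    (L : ℂ) - s * u ^ 2 ≠ 0 := by
  rw [← norm_pos_iff]
  exact lt_of_lt_of_le (by positivity) (add_mul_abs_im_le_norm_sub_mul_sq hu L s)

lemma norm_sub_mul_rayTerm_le (hu : ‖u‖ = 1) (hu' : u.im ≠ 0) {μ L a s : ℝ}
    (hs : 0 ≤ s) (hsμ : s < μ) (hμL : μ ≤ L) (ha : 0 ≤ a) :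
    ‖((μ : ℂ) - s) * rayTerm u L a s‖ ≤ μ / |u.im| * (a / L ^ 2) := by
  have hL : 0 < L := by linarith
  have hN := add_mul_abs_im_le_norm_sub_mul_sq hu L s
  have hcast : ∀ x y : ℝ, ‖(x : ℂ) - y‖ = |x - y| := fun x y => by
    rw [← ofReal_sub, norm_real, Real.norm_eq_abs]
  rw [rayTerm, norm_mul, norm_div, norm_mul, hcast, hcast, norm_real, Real.norm_eq_abs,
    abs_of_pos (by linarith : 0 < μ - s), abs_of_pos (by linarith : 0 < L - s), abs_of_nonneg ha]
  have hratio : (μ - s) / (L - s) ≤ μ / L := by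
    rw [div_le_div_iff₀ (by linarith) hL]; nlinarith
  have hden : a / ‖(L : ℂ) - s * u ^ 2‖ ≤ a / (L * |u.im|) :=
    div_le_div_of_nonneg_left ha (mul_pos hL (abs_pos.mpr hu')) (by nlinarith [abs_nonneg u.im])
  calc (μ - s) * (a / ((L - s) * ‖(L : ℂ) - s * u ^ 2‖))
      = (μ - s) / (L - s) * (a / ‖(L : ℂ) - s * u ^ 2‖) := by
        rw [div_mul_div_comm, mul_div_assoc]
    _ ≤ μ / L * (a / (L * |u.im|)) :=
        mul_le_mul hratio hden (by positivity) (div_nonneg (by linarith) hL.le)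
    _ = μ / |u.im| * (a / L ^ 2) := by field_simp

lemma summable_rayTerm (hu : ‖u‖ = 1) (hu' : u.im ≠ 0) {lam a : ℕ → ℝ} {μ s : ℝ}
    (hs : 0 ≤ s) (hsμ : s < μ) (hlam : ∀ k, μ ≤ lam k) (ha : ∀ k, 0 ≤ a k)
    (hsum : Summable fun k => a k / lam k ^ 2) :
    Summable fun k => rayTerm u (lam k) (a k) s := by
  have hne : ((μ : ℂ) - s) ≠ 0 := by
    rw [← ofReal_sub, ofReal_ne_zero]; linarith
  exact (summable_mul_left_iff hne).mp <| (hsum.mul_left (μ / |u.im|)).of_norm_bounded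
    fun k => norm_sub_mul_rayTerm_le hu hu' hs hsμ (hlam k) (ha k)

lemma tendsto_sub_mul_rayTerm (hu : ‖u‖ = 1) (hu' : u.im ≠ 0) {μ L : ℝ} (a : ℝ)
    (hμ : 0 < μ) (hL : 0 < L) :
    Tendsto (fun s : ℝ => ((μ : ℂ) - s) * rayTerm u L a s) (𝓝[<] μ)
      (𝓝 (if L = μ then a / (μ - μ * u ^ 2) else 0)) := by
  split_ifs with hLμ
  · subst hLμ
    have hcont : Continuous fun s : ℝ => (L : ℂ) - s * u ^ 2 := by fun_prop
    have hlim : Tendsto (fun s : ℝ => (a : ℂ) / (L - s * u ^ 2)) (𝓝 L)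
        (𝓝 (a / (L - L * u ^ 2))) :=
      tendsto_const_nhds.div (hcont.tendsto L) (sub_mul_sq_ne_zero hu hu' (by linarith))
    refine (hlim.mono_left nhdsWithin_le_nhds).congr' ?_
    filter_upwards [Ioo_mem_nhdsLT hL] with s hs
    have hne : ((L : ℂ) - s) ≠ 0 := by
      rw [← ofReal_sub, ofReal_ne_zero]; linarith [hs.2]
    have hne' := sub_mul_sq_ne_zero hu hu' (L := L) (s := s) (by linarith [hs.1])
    rw [rayTerm]
    field_simp
  · have hcont : ContinuousAt (rayTerm u L a) μ := by
      refine continuousAt_const.div (by fun_prop)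
        (mul_ne_zero ?_ (sub_mul_sq_ne_zero hu hu' (by linarith)))
      rw [← ofReal_sub, ofReal_ne_zero]; exact sub_ne_zero.mpr hLμ
    have h0 : Tendsto (fun s : ℝ => ((μ : ℂ) - s)) (𝓝 μ) (𝓝 0) := by
      have : Continuous fun s : ℝ => (μ : ℂ) - s := by fun_prop
      simpa using this.tendsto μ
    simpa using (h0.mul hcont.tendsto).mono_left nhdsWithin_le_nhds

lemma tendsto_sub_mul_tsum_rayTerm (hu : ‖u‖ = 1) (hu' : u.im ≠ 0) {lam a : ℕ → ℝ} {μ : ℝ}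
    (hμ : 0 < μ) (hlam : ∀ k, μ ≤ lam k) (ha : ∀ k, 0 ≤ a k)
    (hsum : Summable fun k => a k / lam k ^ 2) :
    Tendsto (fun s : ℝ => ((μ : ℂ) - s) * ∑' k, rayTerm u (lam k) (a k) s) (𝓝[<] μ)
      (𝓝 (∑' k, if lam k = μ then (a k : ℂ) / (μ - μ * u ^ 2) else 0)) := by
  have hdom := tendsto_tsum_of_dominated_convergence (hsum.mul_left (μ / |u.im|))
    (fun k => tendsto_sub_mul_rayTerm hu hu' (a k) hμ (hμ.trans_le (hlam k)))
    (by
      filter_upwards [Ioo_mem_nhdsLT hμ] with s hs k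
      exact norm_sub_mul_rayTerm_le hu hu' hs.1.le hs.2 (hlam k) (ha k))
  simpa only [tsum_mul_left] using hdom

lemma tendsto_sub_mul_tsum_rayTerm_of_strictMono (hu : ‖u‖ = 1) (hu' : u.im ≠ 0)
    {lam a : ℕ → ℝ} {μ : ℝ} (hμ : 0 < μ) (hmono : StrictMono lam) (hlam : μ ≤ lam 0)
    (ha : ∀ k, 0 ≤ a k) (hsum : Summable fun k => a k / lam k ^ 2) :
    Tendsto (fun s : ℝ => ((μ : ℂ) - s) * ∑' k, rayTerm u (lam k) (a k) s) (𝓝[<] μ)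
      (𝓝 (if lam 0 = μ then (a 0 : ℂ) / (μ - μ * u ^ 2) else 0)) := by
  have hge : ∀ k, μ ≤ lam k := fun k => hlam.trans (hmono.monotone k.zero_le)
  have hsingle : (∑' k, if lam k = μ then (a k : ℂ) / (μ - μ * u ^ 2) else 0)
      = if lam 0 = μ then (a 0 : ℂ) / (μ - μ * u ^ 2) else 0 := by
    refine tsum_eq_single 0 fun k hk => if_neg ?_
    exact (hlam.trans_lt (hmono (Nat.pos_of_ne_zero hk))).ne'
  exact hsingle ▸ tendsto_sub_mul_tsum_rayTerm hu hu' hμ hge ha hsum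

lemma sum_add_tsum_rayTerm_nat_add (hu : ‖u‖ = 1) (hu' : u.im ≠ 0) {lam a : ℕ → ℝ} {μ s : ℝ}
    (n : ℕ) (hs : 0 ≤ s) (hsμ : s < μ) (hlam : ∀ k, μ ≤ lam (k + n)) (ha : ∀ k, 0 ≤ a k)
    (hsum : Summable fun k => a k / lam k ^ 2) :
    ∑ k ∈ Finset.range n, rayTerm u (lam k) (a k) s + ∑' k, rayTerm u (lam (k + n)) (a (k + n)) s
      = ∑' k, rayTerm u (lam k) (a k) s :=
  ((summable_nat_add_iff (f := fun k => rayTerm u (lam k) (a k) s) n).mp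
    (summable_rayTerm hu hu' hs hsμ hlam (fun k => ha (k + n))
      ((summable_nat_add_iff (f := fun k => a k / lam k ^ 2) n).mpr hsum))).sum_add_tsum_nat_add n

lemma eq_and_eq_of_ite_div_eq_ite_div {μ L₁ L₂ x₁ x₂ : ℝ} {d : ℂ} (hd : d ≠ 0)
    (hx₁ : 0 < x₁) (hx₂ : 0 < x₂) (hL : L₁ = μ ∨ L₂ = μ)
    (h : (if L₁ = μ then (x₁ : ℂ) / d else 0) = if L₂ = μ then (x₂ : ℂ) / d else 0) :
    L₁ = L₂ ∧ x₁ = x₂ := by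
  have hne : ∀ x : ℝ, 0 < x → (x : ℂ) / d ≠ 0 := fun x hx =>
    div_ne_zero (ofReal_ne_zero.mpr hx.ne') hd
  split_ifs at h with h₁ h₂ h₂
  · exact ⟨h₁.trans h₂.symm, by exact_mod_cast (div_left_inj' hd).mp h⟩
  · exact absurd h (hne x₁ hx₁)
  · exact absurd h.symm (hne x₂ hx₂)
  · exact (hL.elim h₁ h₂).elim

lemma eventually_tsum_rayTerm_nat_add_eq (hu : ‖u‖ = 1) (hu' : u.im ≠ 0)
    {lam₁ lam₂ a₁ a₂ : ℕ → ℝ} (hpos₁ : ∀ k, 0 < lam₁ k) (hpos₂ : ∀ k, 0 < lam₂ k)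
    (hmono₁ : StrictMono lam₁) (hmono₂ : StrictMono lam₂)
    (ha₁ : ∀ k, 0 ≤ a₁ k) (ha₂ : ∀ k, 0 ≤ a₂ k)
    (hsum₁ : Summable fun k => a₁ k / lam₁ k ^ 2) (hsum₂ : Summable fun k => a₂ k / lam₂ k ^ 2)
    (hF : ∀ s : ℝ, 0 < s → (∀ k, s ≠ lam₁ k ∧ s ≠ lam₂ k) →
      ∑' k, rayTerm u (lam₁ k) (a₁ k) s = ∑' k, rayTerm u (lam₂ k) (a₂ k) s)
    {n : ℕ} (hprefix : ∀ k < n, lam₁ k = lam₂ k ∧ a₁ k = a₂ k) :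
    ∀ᶠ s in 𝓝[<] min (lam₁ n) (lam₂ n),
      ∑' k, rayTerm u (lam₁ (k + n)) (a₁ (k + n)) s
        = ∑' k, rayTerm u (lam₂ (k + n)) (a₂ (k + n)) s := by
  set μ := min (lam₁ n) (lam₂ n)
  have hbelow : ∀ k < n, lam₁ k < μ ∧ lam₂ k < μ := fun k hk => by
    have h₁ := hmono₁ hk
    have h₂ := hmono₂ hk
    rw [← (hprefix k hk).1] at h₂ ⊢
    exact ⟨lt_min h₁ h₂, lt_min h₁ h₂⟩
  have habove₁ : ∀ k, μ ≤ lam₁ (k + n) := fun k =>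
    (min_le_left _ _).trans (hmono₁.monotone (Nat.le_add_left n k))
  have habove₂ : ∀ k, μ ≤ lam₂ (k + n) := fun k =>
    (min_le_right _ _).trans (hmono₂.monotone (Nat.le_add_left n k))
  have hgt : ∀ᶠ s in 𝓝[<] μ, ∀ k ∈ Finset.range n, lam₁ k < s ∧ lam₂ k < s := by
    refine (eventually_all_finset _).mpr fun k hk => ?_
    obtain ⟨h₁, h₂⟩ := hbelow k (Finset.mem_range.mp hk)
    exact eventually_nhdsWithin_of_eventually_nhds ((lt_mem_nhds h₁).and (lt_mem_nhds h₂))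
  filter_upwards [hgt, Ioo_mem_nhdsLT (lt_min (hpos₁ n) (hpos₂ n))] with s hgt hs
  have hpoles : ∀ k, s ≠ lam₁ k ∧ s ≠ lam₂ k := fun k => by
    rcases lt_or_ge k n with hk | hk
    · obtain ⟨h₁, h₂⟩ := hgt k (Finset.mem_range.mpr hk)
      exact ⟨h₁.ne', h₂.ne'⟩
    · obtain ⟨m, rfl⟩ := Nat.exists_eq_add_of_le' hk
      exact ⟨(hs.2.trans_le (habove₁ m)).ne, (hs.2.trans_le (habove₂ m)).ne⟩
  have hprefix_sum : ∑ k ∈ Finset.range n, rayTerm u (lam₁ k) (a₁ k) s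
      = ∑ k ∈ Finset.range n, rayTerm u (lam₂ k) (a₂ k) s :=
    Finset.sum_congr rfl fun k hk => by
      rw [(hprefix k (Finset.mem_range.mp hk)).1, (hprefix k (Finset.mem_range.mp hk)).2]
  have hFs := hF s hs.1 hpoles
  rw [← sum_add_tsum_rayTerm_nat_add hu hu' n hs.1.le hs.2 habove₁ ha₁ hsum₁,
    ← sum_add_tsum_rayTerm_nat_add hu hu' n hs.1.le hs.2 habove₂ ha₂ hsum₂, hprefix_sum] at hFs
  exact add_left_cancel hFs

lemma eq_of_tsum_rayTerm_eq (hu : ‖u‖ = 1) (hu' : u.im ≠ 0) {lam₁ lam₂ a₁ a₂ : ℕ → ℝ}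
    (hpos₁ : ∀ k, 0 < lam₁ k) (hpos₂ : ∀ k, 0 < lam₂ k)
    (hmono₁ : StrictMono lam₁) (hmono₂ : StrictMono lam₂)
    (ha₁ : ∀ k, 0 < a₁ k) (ha₂ : ∀ k, 0 < a₂ k)
    (hsum₁ : Summable fun k => a₁ k / lam₁ k ^ 2) (hsum₂ : Summable fun k => a₂ k / lam₂ k ^ 2)
    (hF : ∀ s : ℝ, 0 < s → (∀ k, s ≠ lam₁ k ∧ s ≠ lam₂ k) →
      ∑' k, rayTerm u (lam₁ k) (a₁ k) s = ∑' k, rayTerm u (lam₂ k) (a₂ k) s)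
    {n : ℕ} (hprefix : ∀ k < n, lam₁ k = lam₂ k ∧ a₁ k = a₂ k) :
    lam₁ n = lam₂ n ∧ a₁ n = a₂ n := by
  set μ := min (lam₁ n) (lam₂ n)
  have hμ : 0 < μ := lt_min (hpos₁ n) (hpos₂ n)
  have htail := eventually_tsum_rayTerm_nat_add_eq hu hu' hpos₁ hpos₂ hmono₁ hmono₂
    (fun k => (ha₁ k).le) (fun k => (ha₂ k).le) hsum₁ hsum₂ hF hprefix
  have hshift : ∀ lam : ℕ → ℝ, StrictMono lam → StrictMono fun k => lam (k + n) :=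
    fun lam hmono i j hij => hmono (by omega)
  have hres₁ := tendsto_sub_mul_tsum_rayTerm_of_strictMono hu hu' hμ (hshift _ hmono₁)
    (by simpa only [zero_add] using min_le_left (lam₁ n) (lam₂ n)) (fun k => (ha₁ (k + n)).le)
    ((summable_nat_add_iff (f := fun k => a₁ k / lam₁ k ^ 2) n).mpr hsum₁)
  have hres₂ := tendsto_sub_mul_tsum_rayTerm_of_strictMono hu hu' hμ (hshift _ hmono₂)
    (by simpa only [zero_add] using min_le_right (lam₁ n) (lam₂ n)) (fun k => (ha₂ (k + n)).le)
    ((summable_nat_add_iff (f := fun k => a₂ k / lam₂ k ^ 2) n).mpr hsum₂)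
  simp only [zero_add] at hres₁ hres₂
  exact eq_and_eq_of_ite_div_eq_ite_div (sub_mul_sq_ne_zero hu hu' (by linarith)) (ha₁ n) (ha₂ n)
    ((min_choice _ _).imp Eq.symm Eq.symm)
    (tendsto_nhds_unique (hres₁.congr' (htail.mono fun s hs => by rw [hs])) hres₂)

end

lemma ray_summand (φ s L a : ℝ) :
    (a : ℂ) / ((-(s : ℂ) * exp (-(φ : ℂ) * I) * exp ((φ : ℂ) * I) + L) *
      (-(s : ℂ) * exp (-(φ : ℂ) * I) * exp (-(φ : ℂ) * I) + L))
      = rayTerm (exp (-(φ : ℂ) * I)) L a s := by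
  have h : exp (-(φ : ℂ) * I) * exp ((φ : ℂ) * I) = 1 := by rw [← Complex.exp_add]; simp
  rw [rayTerm]
  congr 2
  · linear_combination (-(s : ℂ)) * h
  · ring

lemma neg_mul_exp_neg_ne_and_ne {φ s L : ℝ} (hφ : Real.sin φ ≠ 0) (hs : 0 < s) (hL : 0 < L)
    (hsL : s ≠ L) :
    -(s : ℂ) * exp (-(φ : ℂ) * I) ≠ -(L : ℂ) * exp (-(φ : ℂ) * I) ∧
      -(s : ℂ) * exp (-(φ : ℂ) * I) ≠ -(L : ℂ) * exp ((φ : ℂ) * I) := by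
  refine ⟨by simpa [Complex.exp_ne_zero] using hsL, fun h => hφ ?_⟩
  have him := congrArg Complex.im h
  rw [← ofReal_neg, ← ofReal_neg, ← ofReal_neg] at him
  simp only [mul_im, ofReal_re, ofReal_im, exp_ofReal_mul_I_re, exp_ofReal_mul_I_im,
    Real.sin_neg, zero_mul, add_zero] at him
  nlinarith

/-- Let `α ∈ (0,1)` and for `j = 1,2` let `(λ_{j,k})` be strictly
increasing positive sequences and `(a_{j,k})` positive with `∑ a_{j,k}/λ_{j,k}² < ∞`.
If for all `z` outside the poles `-λ_{j,k} e^{∓iαπ}`,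
`∑ₖ a_{1,k}/((z e^{iαπ}+λ_{1,k})(z e^{-iαπ}+λ_{1,k})) =
 ∑ₖ a_{2,k}/((z e^{iαπ}+λ_{2,k})(z e^{-iαπ}+λ_{2,k}))`, then the sequences coincide. -/
theorem stmt10 (α : ℝ) (hα : α ∈ Set.Ioo (0:ℝ) 1)
    (lam₁ lam₂ : ℕ → ℝ) (hpos₁ : ∀ k, 0 < lam₁ k) (hpos₂ : ∀ k, 0 < lam₂ k)
    (hmono₁ : StrictMono lam₁) (hmono₂ : StrictMono lam₂)
    (a₁ a₂ : ℕ → ℝ) (ha₁ : ∀ k, 0 < a₁ k) (ha₂ : ∀ k, 0 < a₂ k)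
    (hsum₁ : Summable (fun k => a₁ k / (lam₁ k) ^ 2))
    (hsum₂ : Summable (fun k => a₂ k / (lam₂ k) ^ 2))
    (heq : ∀ z : ℂ,
      (∀ k, z ≠ -(lam₁ k : ℂ) * Complex.exp (-(α * π : ℝ) * Complex.I)
          ∧ z ≠ -(lam₁ k : ℂ) * Complex.exp ((α * π : ℝ) * Complex.I)
          ∧ z ≠ -(lam₂ k : ℂ) * Complex.exp (-(α * π : ℝ) * Complex.I)
          ∧ z ≠ -(lam₂ k : ℂ) * Complex.exp ((α * π : ℝ) * Complex.I)) →
      (∑' k, (a₁ k : ℂ) /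
          ((z * Complex.exp ((α * π : ℝ) * Complex.I) + (lam₁ k : ℂ)) *
           (z * Complex.exp (-(α * π : ℝ) * Complex.I) + (lam₁ k : ℂ))))
        = ∑' k, (a₂ k : ℂ) /
          ((z * Complex.exp ((α * π : ℝ) * Complex.I) + (lam₂ k : ℂ)) *
           (z * Complex.exp (-(α * π : ℝ) * Complex.I) + (lam₂ k : ℂ)))) :
    (∀ k, lam₁ k = lam₂ k) ∧ (∀ k, a₁ k = a₂ k) := by
  obtain ⟨hα0, hα1⟩ := hα
  set φ := α * π
  have hsin : 0 < Real.sin φ :=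
    Real.sin_pos_of_pos_of_lt_pi (by positivity) (by nlinarith [Real.pi_pos])
  have hu : ‖exp (-(φ : ℂ) * I)‖ = 1 := by rw [← ofReal_neg, norm_exp_ofReal_mul_I]
  have hu' : (exp (-(φ : ℂ) * I)).im ≠ 0 := by
    rw [← ofReal_neg, exp_ofReal_mul_I_im, Real.sin_neg]
    exact neg_ne_zero.mpr hsin.ne'
  have hF : ∀ s : ℝ, 0 < s → (∀ k, s ≠ lam₁ k ∧ s ≠ lam₂ k) →
      ∑' k, rayTerm (exp (-(φ : ℂ) * I)) (lam₁ k) (a₁ k) s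
        = ∑' k, rayTerm (exp (-(φ : ℂ) * I)) (lam₂ k) (a₂ k) s := by
    intro s hs hpoles
    simpa only [ray_summand] using heq (-(s : ℂ) * exp (-(φ : ℂ) * I)) fun k =>
      have h₁ := neg_mul_exp_neg_ne_and_ne hsin.ne' hs (hpos₁ k) (hpoles k).1
      have h₂ := neg_mul_exp_neg_ne_and_ne hsin.ne' hs (hpos₂ k) (hpoles k).2
      ⟨h₁.1, h₁.2, h₂.1, h₂.2⟩
  have h : ∀ n, lam₁ n = lam₂ n ∧ a₁ n = a₂ n := fun n =>
    Nat.strong_induction_on n fun _ IH => eq_of_tsum_rayTerm_eq hu hu' hpos₁ hpos₂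
      hmono₁ hmono₂ ha₁ ha₂ hsum₁ hsum₂ hF IH
  exact ⟨fun k => (h k).1, fun k => (h k).2⟩
end

section
/- Let α ∈ (0,1) and λ > 0. The function z ↦ E_{α,1}(−λ z^α), where z^α is the principal branch on ℂ \ (−∞,0], is holomorphic on ℂ \ (−∞,0], and its boundary values from above and below on the negative real axis differ: for R > 0, lim_{θ→π⁻} [E_{α,1}(−λ(Re^{iθ})^α) − E_{α,1}(−λ(Re^{-iθ})^α)] = E_{α,1}(−λ R^α e^{iαπ}) − E_{α,1}(−λ R^α e^{-iαπ}), which is nonzero for small R, whereas for α = 1 this difference is identically zero. -/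
/-!
`E_{α,1}` is entire: Gautschi's inequality `Γ(x + 1) ≤ Γ(x + α) (x + α)^{1-α}` gives
`Γ(x) / Γ(x + α) → 0`, so the ratio test gives an infinite radius of convergence.
For `z = R e^{iθ}` with `θ ∈ (-π, π]` the principal power is `R^α e^{iαθ}`, which extends
continuously to `θ = ±π` from inside the slit plane; this gives the two boundary values.
The jump `t ↦ E(-t e^{iαπ}) - E(-t e^{-iαπ})` vanishes at `t = 0` and has derivative
`E'(0) (e^{-iαπ} - e^{iαπ}) = -2i sin(απ) / Γ(α + 1) ≠ 0` there, so it is nonzero for small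
`t > 0`. For `α = 1` both boundary points are `-λR`.
-/

open Real Filter Complex

/-- The two-parameter Mittag-Leffler function `E_{α,β}(z) = ∑ zⁿ / Γ(nα+β)`. -/
noncomputable def mittagLeffler (α β : ℝ) (z : ℂ) : ℂ :=
  ∑' n : ℕ, z ^ n / Complex.Gamma ((n : ℂ) * (α : ℂ) + (β : ℂ))

open Topology

theorem Real.Gamma_add_one_le_Gamma_add_mul_rpow {x a : ℝ} (hxa : 0 < x + a) (ha0 : 0 < a)
    (ha1 : a < 1) : Real.Gamma (x + 1) ≤ Real.Gamma (x + a) * (x + a) ^ (1 - a) := by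
  have hG : 0 < Real.Gamma (x + a) := Real.Gamma_pos_of_pos hxa
  calc Real.Gamma (x + 1) = Real.Gamma (a * (x + a) + (1 - a) * (x + a + 1)) := by ring_nf
    _ ≤ Real.Gamma (x + a) ^ a * Real.Gamma (x + a + 1) ^ (1 - a) :=
        Real.Gamma_mul_add_mul_le_rpow_Gamma_mul_rpow_Gamma hxa (by linarith) ha0
          (by linarith) (by ring)
    _ = Real.Gamma (x + a) ^ (a + (1 - a)) * (x + a) ^ (1 - a) := by
        rw [Real.Gamma_add_one hxa.ne', Real.mul_rpow hxa.le hG.le, Real.rpow_add hG]; ring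
    _ = Real.Gamma (x + a) * (x + a) ^ (1 - a) := by norm_num

theorem Real.tendsto_Gamma_div_Gamma_add_atTop {a : ℝ} (ha0 : 0 < a) (ha1 : a < 1) :
    Tendsto (fun x => Real.Gamma x / Real.Gamma (x + a)) atTop (𝓝 0) := by
  have hbound : Tendsto (fun x : ℝ => 2 ^ (1 - a) * x ^ (-a)) atTop (𝓝 0) := by
    simpa using (tendsto_rpow_neg_atTop ha0).const_mul ((2 : ℝ) ^ (1 - a))
  refine squeeze_zero' ?_ ?_ hbound
  · filter_upwards [eventually_gt_atTop 0] with x hx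
    exact div_nonneg (Real.Gamma_pos_of_pos hx).le (Real.Gamma_pos_of_pos (by linarith)).le
  filter_upwards [eventually_ge_atTop 1] with x hx
  have hx0 : 0 < x := by linarith
  have hG : 0 < Real.Gamma (x + a) := Real.Gamma_pos_of_pos (by linarith)
  have hgautschi := Real.Gamma_add_one_le_Gamma_add_mul_rpow (x := x) (by linarith) ha0 ha1
  rw [Real.Gamma_add_one hx0.ne'] at hgautschi
  calc Real.Gamma x / Real.Gamma (x + a) ≤ (x + a) ^ (1 - a) / x := by
        rw [div_le_div_iff₀ hG hx0]; linarith
    _ ≤ (2 * x) ^ (1 - a) / x := by gcongr; linarith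
    _ = 2 ^ (1 - a) * x ^ (-a) := by
        rw [Real.mul_rpow (by norm_num) hx0.le, mul_div_assoc, ← Real.rpow_sub_one hx0.ne']
        ring_nf

noncomputable def mittagLefflerCoeff (α β : ℝ) (n : ℕ) : ℂ :=
  (Complex.Gamma ((n : ℂ) * α + β))⁻¹

noncomputable def mittagLefflerSeries (α β : ℝ) : FormalMultilinearSeries ℂ ℂ ℂ :=
  FormalMultilinearSeries.ofScalars ℂ (mittagLefflerCoeff α β)

section MittagLeffler

variable {α β : ℝ}

theorem mittagLefflerCoeff_eq_ofReal (α β : ℝ) (n : ℕ) :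
    mittagLefflerCoeff α β n = ((Real.Gamma (n * α + β))⁻¹ : ℝ) := by
  rw [mittagLefflerCoeff, Complex.ofReal_inv, ← Complex.Gamma_ofReal]
  push_cast
  rfl

theorem norm_mittagLefflerCoeff (hα : 0 ≤ α) (hβ : 0 < β) (n : ℕ) :
    ‖mittagLefflerCoeff α β n‖ = (Real.Gamma (n * α + β))⁻¹ := by
  have hG : 0 < Real.Gamma (n * α + β) := Real.Gamma_pos_of_pos (by positivity)
  rw [mittagLefflerCoeff_eq_ofReal, Complex.norm_real, Real.norm_of_nonneg (inv_pos.2 hG).le]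

theorem mittagLefflerCoeff_ne_zero (hα : 0 ≤ α) (hβ : 0 < β) (n : ℕ) :
    mittagLefflerCoeff α β n ≠ 0 := by
  rw [← norm_ne_zero_iff, norm_mittagLefflerCoeff hα hβ]
  exact (inv_pos.2 (Real.Gamma_pos_of_pos (by positivity))).ne'

theorem mittagLefflerSeries_radius (hα0 : 0 < α) (hα1 : α < 1) (hβ : 0 < β) :
    (mittagLefflerSeries α β).radius = ⊤ := by
  refine FormalMultilinearSeries.ofScalars_radius_eq_top_of_tendsto _ _
    (Eventually.of_forall (mittagLefflerCoeff_ne_zero hα0.le hβ)) ?_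
  have hlin : Tendsto (fun n : ℕ => (n : ℝ) * α + β) atTop atTop :=
    tendsto_atTop_add_const_right _ β (tendsto_natCast_atTop_atTop.atTop_mul_const hα0)
  refine ((Real.tendsto_Gamma_div_Gamma_add_atTop hα0 hα1).comp hlin).congr fun n => ?_
  simp only [Function.comp_apply, norm_mittagLefflerCoeff hα0.le hβ, Nat.cast_succ]
  rw [inv_div_inv, add_mul, one_mul, add_right_comm]

theorem mittagLeffler_eq_sum (α β : ℝ) : mittagLeffler α β = (mittagLefflerSeries α β).sum := by
  funext z
  refine ((FormalMultilinearSeries.ofScalars_sum_eq _ z).trans (tsum_congr fun n => ?_)).symm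
  rw [smul_eq_mul, mittagLefflerCoeff, mul_comm, div_eq_mul_inv]

theorem hasFPowerSeriesOnBall_mittagLeffler (hα0 : 0 < α) (hα1 : α < 1) (hβ : 0 < β) :
    HasFPowerSeriesOnBall (mittagLeffler α β) (mittagLefflerSeries α β) 0 ⊤ := by
  rw [mittagLeffler_eq_sum, ← mittagLefflerSeries_radius hα0 hα1 hβ]
  exact FormalMultilinearSeries.hasFPowerSeriesOnBall _
    (by rw [mittagLefflerSeries_radius hα0 hα1 hβ]; exact ENNReal.zero_lt_top)

theorem differentiable_mittagLeffler (hα0 : 0 < α) (hα1 : α < 1) (hβ : 0 < β) :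
    Differentiable ℂ (mittagLeffler α β) := by
  intro z
  exact ((hasFPowerSeriesOnBall_mittagLeffler hα0 hα1 hβ).analyticAt_of_mem
    (by simp)).differentiableAt

theorem hasDerivAt_mittagLeffler_zero (hα0 : 0 < α) (hα1 : α < 1) (hβ : 0 < β) :
    HasDerivAt (mittagLeffler α β) (Complex.Gamma (α + β))⁻¹ 0 := by
  refine (hasFPowerSeriesOnBall_mittagLeffler hα0 hα1 hβ).hasFPowerSeriesAt.hasDerivAt
    |>.congr_deriv ?_
  rw [mittagLefflerSeries, FormalMultilinearSeries.ofScalars_apply_eq, mittagLefflerCoeff]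
  simp

end MittagLeffler

theorem Complex.ofReal_mul_exp_mul_I_cpow {R θ : ℝ} (hR : 0 < R) (hθ : θ ∈ Set.Ioc (-π) π)
    (s : ℂ) : ((R : ℂ) * exp (θ * I)) ^ s = (R : ℂ) ^ s * exp (s * θ * I) := by
  have hR' : (R : ℂ) ≠ 0 := ofReal_ne_zero.2 hR.ne'
  rw [cpow_def_of_ne_zero (mul_ne_zero hR' (exp_ne_zero _)), log_ofReal_mul hR (exp_ne_zero _),
    log_exp (by simpa using hθ.1) (by simpa using hθ.2), cpow_def_of_ne_zero hR', ← exp_add,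
    ofReal_log hR.le]
  ring_nf

theorem Complex.tendsto_ofReal_mul_exp_mul_I_cpow {R θ₀ : ℝ} (hR : 0 < R) (s : ℂ)
    {l : Filter ℝ} (hl : l ≤ 𝓝 θ₀) (hθ : ∀ᶠ θ in l, θ ∈ Set.Ioc (-π) π) :
    Tendsto (fun θ : ℝ => ((R : ℂ) * exp (θ * I)) ^ s) l (𝓝 ((R : ℂ) ^ s * exp (s * θ₀ * I))) := by
  have hcont : Continuous fun θ : ℝ => (R : ℂ) ^ s * exp (s * θ * I) := by fun_prop
  exact ((hcont.tendsto θ₀).mono_left hl).congr'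
    (hθ.mono fun θ hθ => (ofReal_mul_exp_mul_I_cpow hR hθ s).symm)

theorem eventually_ne_of_hasDerivAt_zero {f : ℂ → ℂ} {f' a b : ℂ} (hf : HasDerivAt f f' 0)
    (hf' : f' ≠ 0) (hab : a ≠ b) : ∀ᶠ t : ℝ in 𝓝[≠] 0, f (t * a) ≠ f (t * b) := by
  have hcomp : ∀ c : ℂ, HasDerivAt (fun z => f (z * c)) (f' * c) 0 := fun c =>
    (zero_mul c ▸ hf).comp 0 (hasDerivAt_mul_const c)
  have hg : HasDerivAt (fun t : ℝ => f (t * a) - f (t * b)) (f' * a - f' * b) 0 :=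
    ((hcomp a).sub (hcomp b)).comp_ofReal
  have hg' : f' * a - f' * b ≠ 0 := by rw [← mul_sub]; exact mul_ne_zero hf' (sub_ne_zero.2 hab)
  filter_upwards [hg.eventually_ne (c := 0) hg'] with t ht
  exact sub_ne_zero.1 ht

theorem Complex.exp_mul_I_ne_exp_neg_mul_I {x : ℝ} (hx : Real.sin x ≠ 0) :
    exp (x * I) ≠ exp (-x * I) := by
  intro h
  have him := congrArg Complex.im h
  rw [← ofReal_neg, exp_ofReal_mul_I_im, exp_ofReal_mul_I_im, Real.sin_neg] at him
  exact hx (by linarith)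

theorem eventually_mittagLeffler_ne {α β : ℝ} (hα0 : 0 < α) (hα1 : α < 1) (hβ : 0 < β) :
    ∀ᶠ t : ℝ in 𝓝[≠] 0, mittagLeffler α β (t * -exp ((α * π : ℝ) * I)) ≠
      mittagLeffler α β (t * -exp (-(α * π : ℝ) * I)) := by
  have hsin : Real.sin (α * π) ≠ 0 :=
    (Real.sin_pos_of_pos_of_lt_pi (by positivity) (by nlinarith [Real.pi_pos])).ne'
  refine eventually_ne_of_hasDerivAt_zero (hasDerivAt_mittagLeffler_zero hα0 hα1 hβ)
    (inv_ne_zero (Gamma_ne_zero_of_re_pos (by simp; positivity))) ?_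
  exact neg_injective.ne (exp_mul_I_ne_exp_neg_mul_I hsin)

theorem Real.tendsto_const_mul_rpow_nhdsGT_zero_nhdsNE {c a : ℝ} (hc : c ≠ 0) (ha : 0 < a) :
    Tendsto (fun x : ℝ => c * x ^ a) (𝓝[>] 0) (𝓝[≠] 0) := by
  refine tendsto_nhdsWithin_iff.2 ⟨?_, eventually_nhdsWithin_of_forall fun x hx =>
    mul_ne_zero hc (Real.rpow_pos_of_pos hx a).ne'⟩
  have h := ((Real.continuousAt_rpow_const 0 a (Or.inr ha.le)).const_mul c).tendsto
  rw [Real.zero_rpow ha.ne', mul_zero] at h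
  exact h.mono_left nhdsWithin_le_nhds

/-- For `α ∈ (0,1)` and `λ > 0`, the function `z ↦ E_{α,1}(−λ zᵅ)`
(principal branch) is holomorphic on `ℂ ∖ (−∞,0]`; its boundary values from above and
below on the negative real axis differ: for `R > 0`, the difference along `θ → π⁻`
tends to `E_{α,1}(−λ Rᵅ e^{iαπ}) − E_{α,1}(−λ Rᵅ e^{−iαπ})`, which is nonzero for small
`R`; whereas for `α = 1` this jump is identically zero. -/
theorem stmt15 (α : ℝ) (hα : α ∈ Set.Ioo (0:ℝ) 1) (lam : ℝ) (hlam : 0 < lam) :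
    DifferentiableOn ℂ (fun z : ℂ => mittagLeffler α 1 (-(lam : ℂ) * z ^ (α : ℂ)))
      {z : ℂ | ¬(z.im = 0 ∧ z.re ≤ 0)}
    ∧ (∀ R : ℝ, 0 < R →
      Tendsto (fun θ : ℝ =>
          mittagLeffler α 1 (-(lam : ℂ) * ((R : ℂ) * Complex.exp (θ * Complex.I)) ^ (α : ℂ))
          - mittagLeffler α 1
              (-(lam : ℂ) * ((R : ℂ) * Complex.exp (-θ * Complex.I)) ^ (α : ℂ)))
        (nhdsWithin π (Set.Iio π))
        (nhds (mittagLeffler α 1 (-((lam * R ^ α : ℝ) : ℂ) * Complex.exp ((α * π : ℝ) * Complex.I))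
          - mittagLeffler α 1 (-((lam * R ^ α : ℝ) : ℂ) * Complex.exp (-(α * π : ℝ) * Complex.I)))))
    ∧ (∃ ε > (0:ℝ), ∀ R ∈ Set.Ioo (0:ℝ) ε,
        mittagLeffler α 1 (-((lam * R ^ α : ℝ) : ℂ) * Complex.exp ((α * π : ℝ) * Complex.I))
          - mittagLeffler α 1 (-((lam * R ^ α : ℝ) : ℂ) * Complex.exp (-(α * π : ℝ) * Complex.I))
          ≠ 0)
    ∧ (∀ R : ℝ, 0 < R →
        mittagLeffler 1 1 (-((lam * R : ℝ) : ℂ) * Complex.exp ((π : ℝ) * Complex.I))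
          - mittagLeffler 1 1 (-((lam * R : ℝ) : ℂ) * Complex.exp (-(π : ℝ) * Complex.I))
          = 0) := by
  obtain ⟨hα0, hα1⟩ := hα
  have hE := differentiable_mittagLeffler hα0 hα1 one_pos
  refine ⟨fun z hz => ?_, fun R hR => ?_, ?_, fun R _ => ?_⟩
  · have hslit : z ∈ slitPlane := mem_slitPlane_iff.2 (by by_contra! h; exact hz ⟨h.2, h.1⟩)
    exact ((hE _).comp z
      ((differentiableAt_id.cpow_const hslit).const_mul _)).differentiableWithinAt
  · have hcont : Continuous fun w => mittagLeffler α 1 (-(lam : ℂ) * w) :=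
      hE.continuous.comp (by fun_prop)
    have hup := (hcont.tendsto _).comp (tendsto_ofReal_mul_exp_mul_I_cpow hR α
      nhdsWithin_le_nhds (Filter.mem_of_superset (Ioo_mem_nhdsLT (by linarith [pi_pos]))
        Set.Ioo_subset_Ioc_self))
    have hdown := (hcont.tendsto _).comp ((tendsto_ofReal_mul_exp_mul_I_cpow hR α
      nhdsWithin_le_nhds (Filter.mem_of_superset (Ioo_mem_nhdsGT (by linarith [pi_pos]))
        Set.Ioo_subset_Ioc_self)).comp tendsto_neg_nhdsLT)
    convert hup.sub hdown using 2
    · simp only [Function.comp_apply, ofReal_neg]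
    all_goals rw [← ofReal_cpow hR.le]; push_cast; ring_nf
  · obtain ⟨ε, hε, hsub⟩ := mem_nhdsGT_iff_exists_Ioo_subset.1
      ((Real.tendsto_const_mul_rpow_nhdsGT_zero_nhdsNE hlam.ne' hα0).eventually
        (eventually_mittagLeffler_ne hα0 hα1 one_pos))
    refine ⟨ε, hε, fun R hR => ?_⟩
    rw [neg_mul_comm, neg_mul_comm]
    exact sub_ne_zero.2 (hsub hR)
  · rw [exp_pi_mul_I, neg_mul (π : ℂ), exp_neg_pi_mul_I, sub_self]
end
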